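/- Let ε > 0, let B : ℂ → ℂ be holomorphic on the disk D(0,ε), let P : ℂ → ℂ satisfy P'(z) = B(z) for all z ∈ D(0,ε), and let a ∈ ℝ with a ≠ 0. For 0 < |z| < ε define G(z) = a·z + z²·B(z) and ψ(z) = ( G(z) + 1/conj(z), ½(|G(z)|² − 1/|z|²) + Re(G(z)/z) − 2a·log|z| − 2·Re(z·B(z) + P(z)) ) ∈ ℂ × ℝ, and the rotational end ψ̃_R(z) = ( a·z + 1/conj(z), ½(a²|z|² − 1/|z|²) − 2a·log|z| ). Then there exists v ∈ ℂ × ℝ such that ψ(z) − ψ̃_R(z) → v as z → 0 (z ≠ 0); i.e., the end is asymptotic to a type-R end. -/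

import Mathlib

open Complex Filter Topology

/-- The surface `ψ` of a normalized complete embedded end of an improper affine front
with Weierstrass data `F = 1/z`, `G = a·z + z²·B(z)` (the case `b = 0`). -/
noncomputable def psiEndR (B P : ℂ → ℂ) (a : ℝ) (z : ℂ) : ℂ × ℝ :=
  ((a : ℂ) * z + z ^ 2 * B z + 1 / (starRingEnd ℂ) z,
    (1 / 2 : ℝ) * (‖(a : ℂ) * z + z ^ 2 * B z‖ ^ 2 - 1 / ‖z‖ ^ 2)
      + (((a : ℂ) * z + z ^ 2 * B z) / z).re
      - 2 * a * Real.log ‖z‖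
      - 2 * (z * B z + P z).re)

/-- The rotational (type-R) model end. -/
noncomputable def psiTildeR (a : ℝ) (z : ℂ) : ℂ × ℝ :=
  ((a : ℂ) * z + 1 / (starRingEnd ℂ) z,
    (1 / 2 : ℝ) * (a ^ 2 * ‖z‖ ^ 2 - 1 / ‖z‖ ^ 2)
      - 2 * a * Real.log ‖z‖)

theorem end_asymptotic_typeR (ε : ℝ) (hε : 0 < ε) (B P : ℂ → ℂ)
    (hB : DifferentiableOn ℂ B (Metric.ball (0 : ℂ) ε))
    (hP : ∀ z ∈ Metric.ball (0 : ℂ) ε, HasDerivAt P (B z) z)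
    (a : ℝ) (ha : a ≠ 0) :
    ∃ v : ℂ × ℝ,
      Tendsto (fun z : ℂ => psiEndR B P a z - psiTildeR a z)
        (𝓝[≠] (0 : ℂ)) (𝓝 v) := by
  have h0 : (0 : ℂ) ∈ Metric.ball (0 : ℂ) ε := Metric.mem_ball_self hε
  have hBc : ContinuousAt B 0 :=
    hB.continuousOn.continuousAt (Metric.isOpen_ball.mem_nhds h0)
  have hPc : ContinuousAt P 0 := (hP 0 h0).continuousAt
  refine ⟨(0, a - 2 * (P 0).re), ?_⟩
  set g : ℂ → ℂ × ℝ := fun z =>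
    (z ^ 2 * B z,
      (1 / 2 : ℝ) * (‖(a : ℂ) * z + z ^ 2 * B z‖ ^ 2
          - a ^ 2 * ‖z‖ ^ 2)
        + (a + (z * B z).re) - 2 * (z * B z + P z).re) with hg_def
  have key : ∀ z : ℂ, z ≠ 0 → psiEndR B P a z - psiTildeR a z = g z := by
    intro z hz
    have hdiv : ((a : ℂ) * z + z ^ 2 * B z) / z = (a : ℂ) + z * B z := by
      field_simp
    simp only [psiEndR, psiTildeR, Prod.mk_sub_mk, hg_def]
    refine Prod.ext ?_ ?_
    · simp only; ring
    · simp only [hdiv, Complex.add_re, Complex.ofReal_re]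
      ring
  have cG : ContinuousAt (fun z : ℂ => (a : ℂ) * z + z ^ 2 * B z) 0 :=
    (continuousAt_const.mul continuousAt_id).add ((continuousAt_id.pow 2).mul hBc)
  have cabsG : ContinuousAt (fun z : ℂ => ‖(a : ℂ) * z + z ^ 2 * B z‖) 0 :=
    continuous_norm.continuousAt.comp cG
  have cZB : ContinuousAt (fun z : ℂ => z * B z) 0 := continuousAt_id.mul hBc
  have c1 : ContinuousAt (fun z : ℂ => z ^ 2 * B z) 0 := (continuousAt_id.pow 2).mul hBc
  have c2 : ContinuousAt (fun z : ℂ =>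
      (1 / 2 : ℝ) * (‖(a : ℂ) * z + z ^ 2 * B z‖ ^ 2
          - a ^ 2 * ‖z‖ ^ 2)
        + (a + (z * B z).re) - 2 * (z * B z + P z).re) 0 :=
    ((continuousAt_const.mul ((cabsG.pow 2).sub
        (continuousAt_const.mul (continuous_norm.continuousAt.pow 2)))).add
      (continuousAt_const.add (Complex.continuous_re.continuousAt.comp cZB))).sub
      (continuousAt_const.mul (Complex.continuous_re.continuousAt.comp (cZB.add hPc)))
  have hg : ContinuousAt g 0 := c1.prodMk c2
  have hval : g 0 = (0, a - 2 * (P 0).re) := by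
    simp [hg_def]
  have hgt : Tendsto g (𝓝[≠] (0 : ℂ)) (𝓝 (0, a - 2 * (P 0).re)) := by
    rw [← hval]
    exact hg.tendsto.mono_left nhdsWithin_le_nhds
  exact hgt.congr' (eventually_mem_nhdsWithin.mono fun z hz => (key z hz).symm)
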